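/- arXiv:2210.14674 — 5 statements merged into one kernel-verified Lean document; each statement's English description precedes it below -/
import Mathlib

section
/- Let σ be a complex 2×2 involution with σ² = I, let S : ℂ² → ℂ² ⊗ ℂ² be defined by S(v) = |0⟩ ⊗ v + |1⟩ ⊗ σv, and let α be real. Then (exp(i α σ_x) ⊗ I) ∘ S = (I ⊗ exp(i α σ)) ∘ S. -/
open Matrix Kronecker Complex

/-!
Both `σ` and `σₓ` square to the identity, so `exp (c • A) = cosh c • 1 + sinh c • A` for each of
them, and the claim reduces to `(σₓ ⊗ 1) S v = (1 ⊗ σ) S v`. That holds because `σₓ` swaps the two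
branches `|0⟩ ⊗ v` and `|1⟩ ⊗ σ v`, while `σ` sends `v` to `σ v` and, as `σ² = 1`, `σ v` back to `v`.
-/

theorem NormedSpace.exp_smul_of_mul_self_eq_one {𝔸 : Type*} [Ring 𝔸] [Algebra ℂ 𝔸]
    [TopologicalSpace 𝔸] [IsTopologicalRing 𝔸] [ContinuousSMul ℂ 𝔸] [T2Space 𝔸]
    {a : 𝔸} (ha : a * a = 1) (c : ℂ) :
    NormedSpace.exp (c • a) = cosh c • (1 : 𝔸) + sinh c • a := by
  have hpow_even (n : ℕ) : a ^ (2 * n) = 1 := by rw [pow_mul, sq, ha, one_pow]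
  have hterm (n : ℕ) : ((n.factorial : ℂ)⁻¹) • (c • a) ^ n = (c ^ n / n.factorial) • a ^ n := by
    rw [smul_pow, smul_smul, div_eq_inv_mul]
  rw [NormedSpace.exp_eq_tsum ℂ]
  refine HasSum.tsum_eq (HasSum.even_add_odd ?_ ?_)
  · convert (hasSum_cosh c).smul_const (1 : 𝔸) using 2 with k
    rw [hterm, hpow_even]
  · convert (hasSum_sinh c).smul_const a using 2 with k
    rw [hterm, pow_succ a, hpow_even, one_mul]

def stator {R n : Type*} [Fintype n] [CommSemiring R] (σ : Matrix n n R) (v : n → R) :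
    Fin 2 × n → R :=
  fun p => ![(1 : R), 0] p.1 * v p.2 + ![(0 : R), 1] p.1 * (σ *ᵥ v) p.2

theorem pauliX_kronecker_one_mulVec_stator {R n : Type*} [Fintype n] [DecidableEq n]
    [CommSemiring R] {σ : Matrix n n R} (hσ : σ * σ = 1) (v : n → R) :
    (!![0, 1; 1, 0] ⊗ₖ (1 : Matrix n n R)) *ᵥ stator σ v
      = ((1 : Matrix (Fin 2) (Fin 2) R) ⊗ₖ σ) *ᵥ stator σ v := by
  have hσσ : σ *ᵥ (σ *ᵥ v) = v := by rw [mulVec_mulVec, hσ, one_mulVec]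
  funext ⟨i, j⟩
  fin_cases i
  · simp [stator, mulVec, dotProduct, Fintype.sum_prod_type, one_apply]
  · simpa [stator, mulVec, dotProduct, Fintype.sum_prod_type, one_apply] using
      (congrFun hσσ j).symm

theorem stator_exp_eigenoperator (σ : Matrix (Fin 2) (Fin 2) ℂ) (hσ : σ * σ = 1)
    (α : ℝ)
    (S : (Fin 2 → ℂ) → (Fin 2 × Fin 2 → ℂ))
    (hS : ∀ v : Fin 2 → ℂ, S v = fun p =>
      (![(1 : ℂ), 0] p.1) * v p.2 + (![(0 : ℂ), 1] p.1) * σ.mulVec v p.2)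
    (σx : Matrix (Fin 2) (Fin 2) ℂ) (hx : σx = !![0, 1; 1, 0]) :
    ∀ v : Fin 2 → ℂ,
      ((NormedSpace.exp ((Complex.I * (α : ℂ)) • σx)) ⊗ₖ
          (1 : Matrix (Fin 2) (Fin 2) ℂ)).mulVec (S v)
        = ((1 : Matrix (Fin 2) (Fin 2) ℂ) ⊗ₖ
          (NormedSpace.exp ((Complex.I * (α : ℂ)) • σ))).mulVec (S v) := by
  intro v
  obtain rfl : S = stator σ := funext hS
  subst hx
  have hσx : !![0, 1; 1, 0] * !![0, 1; 1, 0] = (1 : Matrix (Fin 2) (Fin 2) ℂ) := by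
    simp [one_fin_two]
  rw [NormedSpace.exp_smul_of_mul_self_eq_one hσ, NormedSpace.exp_smul_of_mul_self_eq_one hσx]
  simp only [add_kronecker, kronecker_add, smul_kronecker, kronecker_smul, add_mulVec,
    smul_mulVec, pauliX_kronecker_one_mulVec_stator hσ]
end

section
/- For all real θ₁, θ₂, θ₃, we have cos θ₁ · cos(θ₂ − θ₃) + sin θ₁ · sin(θ₂ + θ₃) ≤ √2, with equality when θ₁ = θ₂ = θ₃ = π/4. -/
open Real

theorem overlap_le_sqrt_two :
    (∀ θ₁ θ₂ θ₃ : ℝ,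
      Real.cos θ₁ * Real.cos (θ₂ - θ₃) + Real.sin θ₁ * Real.sin (θ₂ + θ₃)
        ≤ Real.sqrt 2) ∧
    Real.cos (π / 4) * Real.cos (π / 4 - π / 4)
      + Real.sin (π / 4) * Real.sin (π / 4 + π / 4) = Real.sqrt 2 := by
  constructor
  · intro θ₁ θ₂ θ₃
    have h1 := sin_sq_add_cos_sq θ₁
    have h2 := neg_one_le_cos (θ₂ - θ₃)
    have h3 := cos_le_one (θ₂ - θ₃)
    have h4 := neg_one_le_sin (θ₂ + θ₃)
    have h5 := sin_le_one (θ₂ + θ₃)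
    have hs : Real.sqrt 2 ^ 2 = 2 := Real.sq_sqrt (by norm_num)
    have hs0 : (0:ℝ) ≤ Real.sqrt 2 := Real.sqrt_nonneg 2
    have key : (Real.cos θ₁ * Real.cos (θ₂ - θ₃) + Real.sin θ₁ * Real.sin (θ₂ + θ₃)) ^ 2 ≤ 2 := by
      nlinarith [sq_nonneg (Real.cos θ₁ * Real.sin (θ₂ + θ₃) - Real.sin θ₁ * Real.cos (θ₂ - θ₃)),
        Real.cos_sq_le_one (θ₂ - θ₃), Real.sin_sq_le_one (θ₂ + θ₃), sq_nonneg (Real.cos θ₁), sq_nonneg (Real.sin θ₁)]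
    nlinarith [sq_nonneg (Real.cos θ₁ * Real.cos (θ₂ - θ₃) + Real.sin θ₁ * Real.sin (θ₂ + θ₃) - Real.sqrt 2)]
  · have : π / 4 + π / 4 = π / 2 := by ring
    rw [sub_self, this, Real.cos_zero, Real.sin_pi_div_two, Real.cos_pi_div_four, Real.sin_pi_div_four]
    ring
end

section
/- The maximum over θ₁, θ₂, θ₃ ∈ [0, π/2] of |⟨φ|g₃⟩|², where |φ⟩ = ⊗ⱼ (cos θⱼ |0⟩ + sin θⱼ |1⟩) and |g₃⟩ = (|000⟩ + |011⟩ + |110⟩ + |101⟩)/2, is exactly 1/2. -/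
/-!
Expanding the sum, twice the overlap is `cos θ₁ cos (θ₂ - θ₃) + sin θ₁ sin (θ₂ + θ₃)`.
By Cauchy–Schwarz against the unit vector `(cos θ₁, sin θ₁)` its square is at most
`cos² (θ₂ - θ₃) + sin² (θ₂ + θ₃) ≤ 2`, so `|⟨φ|g₃⟩|² ≤ 1/2`; all angles equal to `π/4`
give equality.
-/

open Real Complex

noncomputable def g₃ : Fin 2 × Fin 2 × Fin 2 → ℂ := fun q =>
  if q = (0, 0, 0) ∨ q = (0, 1, 1) ∨ q = (1, 1, 0) ∨ q = (1, 0, 1)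
  then (1 / 2 : ℂ) else 0

noncomputable def prodState (θ₁ θ₂ θ₃ : ℝ) : Fin 2 × Fin 2 × Fin 2 → ℂ :=
  fun q => (![(Real.cos θ₁ : ℂ), (Real.sin θ₁ : ℂ)] q.1) *
    (![(Real.cos θ₂ : ℂ), (Real.sin θ₂ : ℂ)] q.2.1) *
    (![(Real.cos θ₃ : ℂ), (Real.sin θ₃ : ℂ)] q.2.2)

lemma sq_mul_add_mul_le_of_sq_add_sq_eq_one {a b : ℝ} (hab : a ^ 2 + b ^ 2 = 1) (u v : ℝ) :
    (a * u + b * v) ^ 2 ≤ u ^ 2 + v ^ 2 := by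
  nlinarith [sq_nonneg (a * v - b * u)]

lemma overlap_prodState_g₃ (θ₁ θ₂ θ₃ : ℝ) :
    ∑ q : Fin 2 × Fin 2 × Fin 2, (starRingEnd ℂ) (prodState θ₁ θ₂ θ₃ q) * g₃ q =
      ((Real.cos θ₁ * Real.cos (θ₂ - θ₃) + Real.sin θ₁ * Real.sin (θ₂ + θ₃)) / 2 : ℝ) := by
  rw [Real.cos_sub, Real.sin_add]
  simp [Fintype.sum_prod_type, Fin.sum_univ_two, prodState, g₃, Prod.ext_iff,
    -Complex.ofReal_cos, -Complex.ofReal_sin, Complex.conj_ofReal]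
  ring

lemma norm_overlap_prodState_g₃_sq_le (θ₁ θ₂ θ₃ : ℝ) :
    ‖∑ q : Fin 2 × Fin 2 × Fin 2, (starRingEnd ℂ) (prodState θ₁ θ₂ θ₃ q) * g₃ q‖ ^ 2 ≤ 1 / 2 := by
  rw [overlap_prodState_g₃, Complex.norm_real, Real.norm_eq_abs, sq_abs, div_pow]
  have hCS := sq_mul_add_mul_le_of_sq_add_sq_eq_one (Real.cos_sq_add_sin_sq θ₁)
    (Real.cos (θ₂ - θ₃)) (Real.sin (θ₂ + θ₃))
  nlinarith [Real.cos_sq_le_one (θ₂ - θ₃), Real.sin_sq_le_one (θ₂ + θ₃)]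

lemma norm_overlap_prodState_pi_div_four_g₃_sq :
    ‖∑ q : Fin 2 × Fin 2 × Fin 2,
      (starRingEnd ℂ) (prodState (π / 4) (π / 4) (π / 4) q) * g₃ q‖ ^ 2 = 1 / 2 := by
  rw [overlap_prodState_g₃, Complex.norm_real, Real.norm_eq_abs, sq_abs, sub_self,
    show π / 4 + π / 4 = π / 2 by ring, Real.cos_zero, Real.sin_pi_div_two,
    Real.cos_pi_div_four, Real.sin_pi_div_four]
  ring_nf
  norm_num

theorem gm_of_h3 :
    IsGreatest
      {x : ℝ | ∃ θ₁ θ₂ θ₃ : ℝ, θ₁ ∈ Set.Icc 0 (π / 2) ∧ θ₂ ∈ Set.Icc 0 (π / 2)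
        ∧ θ₃ ∈ Set.Icc 0 (π / 2) ∧
        x = ‖∑ q : Fin 2 × Fin 2 × Fin 2,
          (starRingEnd ℂ) (prodState θ₁ θ₂ θ₃ q) * g₃ q‖ ^ 2}
      (1 / 2) := by
  have hπ4 : π / 4 ∈ Set.Icc 0 (π / 2) := ⟨by positivity, by linarith [pi_pos]⟩
  refine ⟨⟨π / 4, π / 4, π / 4, hπ4, hπ4, hπ4,
    norm_overlap_prodState_pi_div_four_g₃_sq.symm⟩, ?_⟩
  rintro x ⟨θ₁, θ₂, θ₃, -, -, -, rfl⟩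
  exact norm_overlap_prodState_g₃_sq_le θ₁ θ₂ θ₃
end

section
/- For every positive integer N, the supremum over θ₁,…,θ_{2N+1} ∈ [0, π/2] of the expression cos θ₁ · ∏_{t=2}^{N+1} cos(θ_t − θ_{t+N}) + sin θ₁ · ∏_{t=2}^{N+1} sin(θ_t + θ_{t+N}) equals √2, attained at all θⱼ = π/4. -/
open Real Finset

noncomputable def gmExpr (N : ℕ) (θ : ℕ → ℝ) : ℝ :=
  Real.cos (θ 1) * ∏ t ∈ Finset.Icc 2 (N + 1), Real.cos (θ t - θ (t + N))
    + Real.sin (θ 1) * ∏ t ∈ Finset.Icc 2 (N + 1), Real.sin (θ t + θ (t + N))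

lemma abs_cos_add_abs_sin_le_sqrt_two (t : ℝ) :
    |Real.cos t| + |Real.sin t| ≤ Real.sqrt 2 := by
  have h2 : (|Real.cos t| + |Real.sin t|) ^ 2 ≤ 2 := by
    nlinarith [Real.sin_sq_add_cos_sq t, sq_abs (Real.cos t), sq_abs (Real.sin t),
      sq_nonneg (|Real.cos t| - |Real.sin t|)]
  have := Real.sqrt_le_sqrt h2
  rwa [Real.sqrt_sq (by positivity)] at this

lemma gm_at_pi_div_four (N : ℕ) : gmExpr N (fun _ => π / 4) = Real.sqrt 2 := by
  have : π / 4 + π / 4 = π / 2 := by ring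
  simp [gmExpr, this, Real.sin_pi_div_two, Real.cos_pi_div_four, Real.sin_pi_div_four]

theorem gm_expr_sup (N : ℕ) (hN : 1 ≤ N) :
    IsGreatest
      {x : ℝ | ∃ θ : ℕ → ℝ,
        (∀ j ∈ Finset.Icc 1 (2 * N + 1), θ j ∈ Set.Icc 0 (π / 2)) ∧
        x = gmExpr N θ}
      (Real.sqrt 2)
    ∧ gmExpr N (fun _ => π / 4) = Real.sqrt 2 := by
  refine ⟨⟨⟨fun _ => π / 4, fun j _ => ⟨by positivity, by linarith [Real.pi_pos]⟩,
      (gm_at_pi_div_four N).symm⟩, ?_⟩, gm_at_pi_div_four N⟩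
  rintro x ⟨θ, hθ, rfl⟩
  set A := ∏ t ∈ Finset.Icc 2 (N + 1), Real.cos (θ t - θ (t + N)) with hA'
  set B := ∏ t ∈ Finset.Icc 2 (N + 1), Real.sin (θ t + θ (t + N)) with hB'
  have hA : |A| ≤ 1 := by
    rw [hA', Finset.abs_prod]
    exact Finset.prod_le_one (fun i _ => abs_nonneg _)
      (fun i _ => Real.abs_cos_le_one _)
  have hB : |B| ≤ 1 := by
    rw [hB', Finset.abs_prod]
    exact Finset.prod_le_one (fun i _ => abs_nonneg _)
      (fun i _ => Real.abs_sin_le_one _)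
  calc gmExpr N θ ≤ |Real.cos (θ 1) * A| + |Real.sin (θ 1) * B| :=
        add_le_add (le_abs_self _) (le_abs_self _)
    _ = |Real.cos (θ 1)| * |A| + |Real.sin (θ 1)| * |B| := by rw [abs_mul, abs_mul]
    _ ≤ |Real.cos (θ 1)| * 1 + |Real.sin (θ 1)| * 1 :=
        add_le_add (mul_le_mul_of_nonneg_left hA (abs_nonneg _))
          (mul_le_mul_of_nonneg_left hB (abs_nonneg _))
    _ = |Real.cos (θ 1)| + |Real.sin (θ 1)| := by ring
    _ ≤ Real.sqrt 2 := abs_cos_add_abs_sin_le_sqrt_two _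
end

section
/- Let λ ∈ (0, π/2), α ∈ ℝ with cos α ≠ 0 and sin α ≠ 0, and suppose there exist a nonzero complex number L and real ω such that (√2/2)·e^{−iω}·sin λ = i L sin α and (√2/2)·cos λ = L cos α. Then L is real, L = ±√2/2, ω = π/2 or ω = 3π/2, and |tan λ| = |tan α|. -/
open Real Complex

/-! Taking moduli of both equations (with `‖exp (-ω i)‖ = 1`) gives
`√2/2 |sin λ| = ‖L‖ |sin α|` and `√2/2 |cos λ| = ‖L‖ |cos α|`; adding their squares yields
`‖L‖ = √2/2`, hence `|sin λ| = |sin α|` and `|cos λ| = |cos α|`, which gives the tangents.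
The second equation forces `L` to be real, and then the real part of the first reads
`√2/2 cos ω sin λ = 0`, so `cos ω = 0`. -/

theorem Real.eq_pi_div_two_or_eq_three_pi_div_two_of_cos_eq_zero {ω : ℝ}
    (hω : ω ∈ Set.Ico 0 (2 * π)) (h : Real.cos ω = 0) : ω = π / 2 ∨ ω = 3 * π / 2 := by
  obtain ⟨k, rfl⟩ := Real.cos_eq_zero_iff.mp h
  obtain ⟨h0, h2π⟩ := hω
  obtain ⟨hk₁, hk₂⟩ : -1 < k ∧ k < 2 := by
    constructor <;> by_contra! hk
    · have : (k : ℝ) ≤ -1 := by exact_mod_cast hk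
      nlinarith [pi_pos]
    · have : (2 : ℝ) ≤ k := by exact_mod_cast hk
      nlinarith [pi_pos]
  interval_cases k
  · left; push_cast; ring
  · right; push_cast; ring

theorem Real.abs_tan_eq_abs_tan {x y : ℝ} (hsin : |Real.sin x| = |Real.sin y|)
    (hcos : |Real.cos x| = |Real.cos y|) : |Real.tan x| = |Real.tan y| := by
  rw [Real.tan_eq_sin_div_cos, Real.tan_eq_sin_div_cos, abs_div, abs_div, hsin, hcos]

theorem eq_of_mul_abs_sin_eq_of_mul_abs_cos_eq {a b x y : ℝ} (ha : 0 ≤ a) (hb : 0 ≤ b)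
    (hsin : a * |Real.sin x| = b * |Real.sin y|) (hcos : a * |Real.cos x| = b * |Real.cos y|) :
    a = b := by
  have hsq : a ^ 2 = b ^ 2 := by
    have hsin' := congrArg (· ^ 2) hsin
    have hcos' := congrArg (· ^ 2) hcos
    simp only [mul_pow, sq_abs] at hsin' hcos'
    linear_combination -a ^ 2 * Real.sin_sq_add_cos_sq x + b ^ 2 * Real.sin_sq_add_cos_sq y
      + hsin' + hcos'
  exact (pow_left_inj₀ ha hb two_ne_zero).mp hsq

theorem Complex.eq_or_eq_neg_of_im_eq_zero_of_norm_eq {z : ℂ} {r : ℝ} (hr : 0 ≤ r)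
    (him : z.im = 0) (hnorm : ‖z‖ = r) : z = r ∨ z = -r := by
  have hz : z = z.re := Complex.ext rfl (by simp [him])
  rw [hz, Complex.norm_real, Real.norm_eq_abs, abs_eq hr] at hnorm
  rcases hnorm with h | h
  · exact Or.inl (by rw [hz, h])
  · exact Or.inr (by rw [hz, h, ofReal_neg])

section

variable {r x y ω : ℝ} {L : ℂ}

theorem mul_abs_sin_eq_norm_mul_abs_sin (hr : 0 ≤ r)
    (h : (r : ℂ) * exp (-(ω : ℂ) * I) * Real.sin x = I * L * Real.sin y) :
    r * |Real.sin x| = ‖L‖ * |Real.sin y| := by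
  simpa only [norm_mul, Complex.norm_real, Real.norm_eq_abs, ← ofReal_neg,
    norm_exp_ofReal_mul_I, Complex.norm_I, abs_of_nonneg hr, mul_one, one_mul] using
    congrArg norm h

theorem cos_eq_zero_of_mul_exp_mul_sin_eq (hr : r ≠ 0) (hx : Real.sin x ≠ 0) (hL : L.im = 0)
    (h : (r : ℂ) * exp (-(ω : ℂ) * I) * Real.sin x = I * L * Real.sin y) :
    Real.cos ω = 0 := by
  have hre := congrArg re h
  simp only [re_ofReal_mul, re_mul_ofReal, ← ofReal_neg, exp_ofReal_mul_I_re, Real.cos_neg,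
    I_mul_re, hL, neg_zero, zero_mul] at hre
  simpa [hr, hx] using hre

theorem mul_abs_cos_eq_norm_mul_abs_cos (hr : 0 ≤ r)
    (h : (r : ℂ) * Real.cos x = L * Real.cos y) :
    r * |Real.cos x| = ‖L‖ * |Real.cos y| := by
  simpa only [norm_mul, Complex.norm_real, Real.norm_eq_abs, abs_of_nonneg hr] using
    congrArg norm h

theorem im_eq_zero_of_ofReal_mul_eq {c d : ℝ} (hd : d ≠ 0) (h : (r : ℂ) * c = L * d) :
    L.im = 0 := by
  have him := congrArg im h
  simp only [im_mul_ofReal, ofReal_im, zero_mul] at him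
  exact (mul_eq_zero.mp him.symm).resolve_right hd

end

theorem povm_parameter_constraints_general (lam α : ℝ)
    (hlam : lam ∈ Set.Ioo 0 (π / 2))
    (hcos : Real.cos α ≠ 0)
    (L : ℂ) (ω : ℝ) (hω : ω ∈ Set.Ico 0 (2 * π))
    (h₁ : (Real.sqrt 2 / 2 : ℂ) * Complex.exp (-(ω : ℂ) * Complex.I)
        * (Real.sin lam : ℂ) = Complex.I * L * (Real.sin α : ℂ))
    (h₂ : (Real.sqrt 2 / 2 : ℂ) * (Real.cos lam : ℂ) = L * (Real.cos α : ℂ)) :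
    L.im = 0 ∧ (L = (Real.sqrt 2 / 2 : ℂ) ∨ L = -(Real.sqrt 2 / 2 : ℂ)) ∧
      (ω = π / 2 ∨ ω = 3 * π / 2) ∧
      |Real.tan lam| = |Real.tan α| := by
  have hr : (0 : ℝ) < √2 / 2 := by positivity
  have hcast : (Real.sqrt 2 / 2 : ℂ) = ((√2 / 2 : ℝ) : ℂ) := by push_cast; rfl
  rw [hcast] at h₁ h₂ ⊢
  have hsin_lam : Real.sin lam ≠ 0 :=
    (Real.sin_pos_of_pos_of_lt_pi hlam.1 (by linarith [hlam.2, pi_pos])).ne'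
  have hsin_abs := mul_abs_sin_eq_norm_mul_abs_sin hr.le h₁
  have hcos_abs := mul_abs_cos_eq_norm_mul_abs_cos hr.le h₂
  have hnorm : ‖L‖ = √2 / 2 :=
    (eq_of_mul_abs_sin_eq_of_mul_abs_cos_eq hr.le (norm_nonneg L) hsin_abs hcos_abs).symm
  have him : L.im = 0 := im_eq_zero_of_ofReal_mul_eq hcos h₂
  rw [hnorm] at hsin_abs hcos_abs
  refine ⟨him, Complex.eq_or_eq_neg_of_im_eq_zero_of_norm_eq hr.le him hnorm,
    Real.eq_pi_div_two_or_eq_three_pi_div_two_of_cos_eq_zero hω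
      (cos_eq_zero_of_mul_exp_mul_sin_eq hr.ne' hsin_lam him h₁), ?_⟩
  exact Real.abs_tan_eq_abs_tan (mul_left_cancel₀ hr.ne' hsin_abs)
    (mul_left_cancel₀ hr.ne' hcos_abs)

theorem povm_parameter_constraints (lam α : ℝ)
    (hlam : lam ∈ Set.Ioo 0 (π / 2))
    (hcos : Real.cos α ≠ 0) (hsin : Real.sin α ≠ 0)
    (L : ℂ) (hL : L ≠ 0) (ω : ℝ) (hω : ω ∈ Set.Ico 0 (2 * π))
    (h₁ : (Real.sqrt 2 / 2 : ℂ) * Complex.exp (-(ω : ℂ) * Complex.I)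
        * (Real.sin lam : ℂ) = Complex.I * L * (Real.sin α : ℂ))
    (h₂ : (Real.sqrt 2 / 2 : ℂ) * (Real.cos lam : ℂ) = L * (Real.cos α : ℂ)) :
    L.im = 0 ∧ (L = (Real.sqrt 2 / 2 : ℂ) ∨ L = -(Real.sqrt 2 / 2 : ℂ)) ∧
      (ω = π / 2 ∨ ω = 3 * π / 2) ∧
      |Real.tan lam| = |Real.tan α| :=
  povm_parameter_constraints_general lam α hlam hcos L ω hω h₁ h₂
end
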